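/- For any ξ = (ξ₁, ξ₂) ∈ ℂ × ℂ, the second order Kobayashi metric of the unit disc at the origin satisfies K²_Δ(0, ξ) = sqrt(|ξ₁|² + |ξ₂|/2). That is, the infimum of 1/λ over λ > 0 such that there exists a holomorphic f : Δ → Δ with f(0) = 0, f'(0) = λξ₁ and f''(0) = λ²ξ₂ equals sqrt(|ξ₁|² + |ξ₂|/2). -/

import Mathlib

/-!
For `f : Δ → Δ` with `f 0 = 0`, the Schwarz lemma says that `g z = f z / z` (i.e. `dslope f 0`)
maps `Δ` into the closed disc, and `g 0 = f'(0)`, `g'(0) = f''(0) / 2`. The Schwarz–Pick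
inequality `|g'(0)| ≤ 1 - |g(0)|²` then gives `|f'(0)|² + |f''(0)|/2 ≤ 1`, so a jet `(λξ₁, λ²ξ₂)`
is realised only if `λ² (|ξ₁|² + |ξ₂|/2) ≤ 1`. Conversely every `(a, b)` with
`|a|² + |b|/2 ≤ 1` is realised by the degree-two Blaschke product `z (a + εz) / (1 + āεz)` with
`ε = b / (2(1 - |a|²))`. Hence the admissible `1/λ` are exactly those `≥ √(|ξ₁|² + |ξ₂|/2)`.
-/

open Metric Set
open scoped ComplexConjugate

theorem iteratedDeriv_two_eq_two_mul_deriv_dslope {𝕜 : Type*} [NontriviallyNormedField 𝕜]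
    [CompleteSpace 𝕜] {f : 𝕜 → 𝕜} {a : 𝕜} (hf : AnalyticAt 𝕜 f a) :
    iteratedDeriv 2 f a = 2 * deriv (dslope f a) a := by
  obtain ⟨p, hp⟩ := hf
  have hderiv : deriv (dslope f a) a = p.coeff 2 :=
    hp.has_fpower_series_dslope_fslope.deriv.trans FormalMultilinearSeries.coeff_fslope
  obtain ⟨r, hr⟩ := hp
  rw [iteratedDeriv_eq_iteratedFDeriv, ← hr.factorial_smul 1 2, hderiv]
  simp [FormalMultilinearSeries.apply_eq_prod_smul_coeff, Nat.factorial]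

theorem dslope_sub_smul_of_differentiableAt {𝕜 E : Type*} [NontriviallyNormedField 𝕜]
    [NormedAddCommGroup E] [NormedSpace 𝕜 E] {g : 𝕜 → E} {a : 𝕜}
    (hg : DifferentiableAt 𝕜 g a) :
    dslope (fun z => (z - a) • g z) a = g := by
  classical
  rw [dslope_sub_smul, Function.update_eq_self_iff]
  simpa using (((hasDerivAt_id a).sub_const a).fun_smul hg.hasDerivAt).deriv

theorem sInf_one_div_of_sq_mul_le_one (A : ℝ) :
    sInf {x : ℝ | ∃ lam : ℝ, 0 < lam ∧ x = 1 / lam ∧ lam ^ 2 * A ≤ 1} = √A := by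
  have mem : ∀ x, 0 < x → √A ≤ x →
      x ∈ {x : ℝ | ∃ lam : ℝ, 0 < lam ∧ x = 1 / lam ∧ lam ^ 2 * A ≤ 1} := fun x hx hAx =>
    ⟨1 / x, by positivity, (one_div_one_div x).symm, by
      rw [div_pow, one_pow, div_mul_eq_mul_div, one_mul, div_le_one (by positivity)]
      exact (Real.sqrt_le_left hx.le).1 hAx⟩
  refine csInf_eq_of_forall_ge_of_forall_gt_exists_lt
    ⟨√A + 1, mem _ (by positivity) (by linarith)⟩ ?_ fun w hw => ?_
  · rintro _ ⟨lam, hlam, rfl, hle⟩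
    rw [Real.sqrt_le_left (by positivity), div_pow, one_pow, le_div_iff₀ (by positivity)]
    linarith
  · exact ⟨(√A + w) / 2, mem _ (by linarith [Real.sqrt_nonneg A]) (by linarith), by linarith⟩

namespace Complex

noncomputable def mobius (a w : ℂ) : ℂ := (w - a) / (1 - conj a * w)

theorem sq_norm_one_sub_conj_mul_sub_sq_norm_sub (a w : ℂ) :
    ‖1 - conj a * w‖ ^ 2 - ‖w - a‖ ^ 2 = (1 - ‖a‖ ^ 2) * (1 - ‖w‖ ^ 2) := by
  simp only [Complex.sq_norm, normSq_apply, sub_re, sub_im, mul_re, mul_im, conj_re, conj_im,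
    one_re, one_im]
  ring

theorem norm_mobius_le_one {a w : ℂ} (ha : ‖a‖ ≤ 1) (hw : ‖w‖ ≤ 1) : ‖mobius a w‖ ≤ 1 := by
  have hsq : ‖w - a‖ ^ 2 ≤ ‖1 - conj a * w‖ ^ 2 := by
    have := sq_norm_one_sub_conj_mul_sub_sq_norm_sub a w
    nlinarith [mul_nonneg (sub_nonneg.2 (pow_le_one₀ (n := 2) (norm_nonneg a) ha))
      (sub_nonneg.2 (pow_le_one₀ (n := 2) (norm_nonneg w) hw))]
  rw [mobius, norm_div]
  exact div_le_one_of_le₀ ((pow_le_pow_iff_left₀ (norm_nonneg _) (norm_nonneg _) two_ne_zero).1 hsq)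
    (norm_nonneg _)

theorem one_sub_conj_mul_ne_zero {a w : ℂ} (h : ‖a‖ * ‖w‖ < 1) : 1 - conj a * w ≠ 0 := by
  intro h0
  have : ‖conj a * w‖ = 1 := by rw [← sub_eq_zero.1 h0, norm_one]
  rw [norm_mul, RCLike.norm_conj] at this
  exact h.ne this

theorem hasDerivAt_mobius {a w : ℂ} (h : 1 - conj a * w ≠ 0) :
    HasDerivAt (mobius a) ((1 - ‖a‖ ^ 2) / (1 - conj a * w) ^ 2) w := by
  refine (((hasDerivAt_id w).sub_const a).fun_div
    (((hasDerivAt_id w).const_mul (conj a)).const_sub 1) h).congr_deriv ?_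
  rw [← conj_mul', id]
  field_simp
  ring

@[simp]
theorem mobius_self (a : ℂ) : mobius a a = 0 := by
  simp [mobius]

theorem deriv_eq_zero_of_mapsTo_closedBall_of_norm_eq_one {g : ℂ → ℂ}
    (hd : DifferentiableOn ℂ g (ball 0 1)) (hg : MapsTo g (ball 0 1) (closedBall 0 1))
    (h0 : ‖g 0‖ = 1) : deriv g 0 = 0 := by
  have hmax : IsMaxOn (norm ∘ g) (ball 0 1) 0 := fun z hz => by
    simpa [h0] using hg hz
  have hconst := eqOn_of_isPreconnected_of_isMaxOn_norm (convex_ball 0 1).isPreconnected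
    isOpen_ball hd (mem_ball_self one_pos) hmax
  rw [(hconst.eventuallyEq_of_mem (ball_mem_nhds 0 one_pos)).deriv_eq]
  exact deriv_const 0 (g 0)

theorem norm_deriv_le_one_sub_sq_of_mapsTo_closedBall {g : ℂ → ℂ}
    (hd : DifferentiableOn ℂ g (ball 0 1)) (hg : MapsTo g (ball 0 1) (closedBall 0 1)) :
    ‖deriv g 0‖ ≤ 1 - ‖g 0‖ ^ 2 := by
  have hg' : ∀ z ∈ ball (0 : ℂ) 1, ‖g z‖ ≤ 1 := fun z hz => by simpa using hg hz
  rcases (hg' 0 (mem_ball_self one_pos)).eq_or_lt with ha | ha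
  · rw [deriv_eq_zero_of_mapsTo_closedBall_of_norm_eq_one hd hg ha, ha]
    norm_num
  -- Composing with the disc automorphism sending `g 0` to `0` reduces to the Schwarz lemma.
  have hden : ∀ z ∈ ball (0 : ℂ) 1, 1 - conj (g 0) * g z ≠ 0 := fun z hz =>
    one_sub_conj_mul_ne_zero <| by nlinarith [hg' z hz, norm_nonneg (g 0)]
  have hdiff : DifferentiableOn ℂ (mobius (g 0) ∘ g) (ball 0 1) := fun z hz =>
    (hasDerivAt_mobius (hden z hz)).differentiableAt.comp_differentiableWithinAt z (hd z hz)
  have hmaps : MapsTo (mobius (g 0) ∘ g) (ball 0 1) (closedBall (mobius (g 0) (g 0)) 1) := by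
    intro z hz
    simpa using norm_mobius_le_one ha.le (hg' z hz)
  have hschwarz := norm_deriv_le_div_of_mapsTo_ball hdiff hmaps one_pos
  have hpos : 0 < 1 - ‖g 0‖ ^ 2 := by nlinarith [norm_nonneg (g 0)]
  have hderiv : deriv (mobius (g 0) ∘ g) 0 = deriv g 0 / ((1 - ‖g 0‖ ^ 2 : ℝ) : ℂ) := by
    have hg0 := (hd.differentiableAt (ball_mem_nhds 0 one_pos)).hasDerivAt
    rw [((hasDerivAt_mobius (hden 0 (mem_ball_self one_pos))).comp 0 hg0).deriv, conj_mul']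
    have : (1 : ℂ) - ‖g 0‖ ^ 2 ≠ 0 := by exact_mod_cast hpos.ne'
    push_cast
    field_simp
  rw [hderiv, norm_div, norm_real, Real.norm_of_nonneg hpos.le, div_one,
    div_le_one hpos] at hschwarz
  exact hschwarz

theorem norm_deriv_sq_add_norm_iteratedDeriv_two_div_two_le_one {f : ℂ → ℂ}
    (hd : DifferentiableOn ℂ f (ball 0 1)) (hf : MapsTo f (ball 0 1) (ball 0 1)) (h0 : f 0 = 0) :
    ‖deriv f 0‖ ^ 2 + ‖iteratedDeriv 2 f 0‖ / 2 ≤ 1 := by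
  have hf' : MapsTo f (ball 0 1) (closedBall (f 0) 1) := by
    rw [h0]
    exact hf.mono_right ball_subset_closedBall
  have hslope : MapsTo (dslope f 0) (ball 0 1) (closedBall 0 1) := fun z hz => by
    simpa using norm_dslope_le_div_of_mapsTo_ball hd hf' hz
  have hpick := norm_deriv_le_one_sub_sq_of_mapsTo_closedBall
    ((differentiableOn_dslope (ball_mem_nhds 0 one_pos)).2 hd) hslope
  rw [dslope_same] at hpick
  rw [iteratedDeriv_two_eq_two_mul_deriv_dslope (hd.analyticAt (ball_mem_nhds 0 one_pos)),
    norm_mul, RCLike.norm_two]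
  linarith

theorem exists_mapsTo_ball_deriv_iteratedDeriv_two {a b : ℂ} (h : ‖a‖ ^ 2 + ‖b‖ / 2 ≤ 1) :
    ∃ f : ℂ → ℂ, DifferentiableOn ℂ f (ball 0 1) ∧ MapsTo f (ball 0 1) (ball 0 1) ∧ f 0 = 0 ∧
      deriv f 0 = a ∧ iteratedDeriv 2 f 0 = b := by
  set c : ℝ := 1 - ‖a‖ ^ 2
  have hb : ‖b‖ ≤ 2 * c := by linarith
  have ha : ‖a‖ ≤ 1 := by nlinarith [norm_nonneg a, norm_nonneg b]
  -- When `‖a‖ = 1`, `b = 0` and division by zero gives the right value `ε = 0`.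
  set ε := b / ((2 * c : ℝ) : ℂ)
  have hε : ‖ε‖ ≤ 1 := by
    rw [norm_div, norm_real, Real.norm_of_nonneg (by linarith [norm_nonneg b])]
    exact div_le_one_of_le₀ hb (by linarith [norm_nonneg b])
  set g : ℂ → ℂ := fun z => mobius (-a) (ε * z)
  have hg : ∀ z ∈ ball (0 : ℂ) 1,
      HasDerivAt g ((1 - ‖a‖ ^ 2) / (1 - conj (-a) * (ε * z)) ^ 2 * ε) z := by
    intro z hz
    rw [mem_ball_zero_iff] at hz
    have hden : 1 - conj (-a) * (ε * z) ≠ 0 := one_sub_conj_mul_ne_zero <| by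
      rw [norm_neg, norm_mul]
      nlinarith [mul_le_mul ha hε (norm_nonneg ε) zero_le_one, norm_nonneg a, norm_nonneg ε,
        norm_nonneg z]
    exact ((hasDerivAt_mobius hden).comp z ((hasDerivAt_id z).const_mul ε)).congr_deriv (by simp)
  have hgdiff : DifferentiableOn ℂ g (ball 0 1) := fun z hz =>
    (hg z hz).differentiableAt.differentiableWithinAt
  have hfdiff : DifferentiableOn ℂ (fun z => z * g z) (ball 0 1) := differentiableOn_id.mul hgdiff
  have hdslope : dslope (fun z => z * g z) 0 = g := by
    simpa using dslope_sub_smul_of_differentiableAt (hg 0 (mem_ball_self one_pos)).differentiableAt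
  refine ⟨fun z => z * g z, hfdiff, fun z hz => ?_, by simp, ?_, ?_⟩
  · rw [mem_ball_zero_iff] at hz ⊢
    have hgz : ‖g z‖ ≤ 1 := norm_mobius_le_one (by rwa [norm_neg]) <| by
      rw [norm_mul]
      nlinarith [norm_nonneg ε, norm_nonneg z]
    rw [norm_mul]
    nlinarith [norm_nonneg z, norm_nonneg (g z)]
  · rw [← dslope_same, hdslope]
    simp [g, mobius]
  · rw [iteratedDeriv_two_eq_two_mul_deriv_dslope (hfdiff.analyticAt (ball_mem_nhds 0 one_pos)),
      hdslope, (hg 0 (mem_ball_self one_pos)).deriv]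
    have hcast : (1 : ℂ) - ‖a‖ ^ 2 = c := by push_cast [c]; rfl
    simp only [mul_zero, sub_zero, one_pow, div_one, hcast, ε]
    rcases eq_or_ne c 0 with hc | hc
    · simp [hc, norm_le_zero_iff.1 (by linarith : ‖b‖ ≤ 0)]
    · have hc' : (c : ℂ) ≠ 0 := ofReal_ne_zero.2 hc
      push_cast
      field_simp

theorem exists_mapsTo_ball_deriv_iteratedDeriv_two_iff (a b : ℂ) :
    (∃ f : ℂ → ℂ, DifferentiableOn ℂ f (ball 0 1) ∧ MapsTo f (ball 0 1) (ball 0 1) ∧ f 0 = 0 ∧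
      deriv f 0 = a ∧ iteratedDeriv 2 f 0 = b) ↔ ‖a‖ ^ 2 + ‖b‖ / 2 ≤ 1 := by
  refine ⟨?_, exists_mapsTo_ball_deriv_iteratedDeriv_two⟩
  rintro ⟨f, hd, hf, h0, rfl, rfl⟩
  exact norm_deriv_sq_add_norm_iteratedDeriv_two_div_two_le_one hd hf h0

end Complex

/-- The second order Kobayashi metric of the unit disc at the origin:
`K²_Δ(0, (ξ₁,ξ₂)) = √(|ξ₁|² + |ξ₂|/2)`. -/
theorem kobayashi_two_metric_disc (ξ₁ ξ₂ : ℂ) :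
    sInf {x : ℝ | ∃ lam : ℝ, 0 < lam ∧ x = 1 / lam ∧
        ∃ f : ℂ → ℂ, DifferentiableOn ℂ f (ball (0 : ℂ) 1) ∧
          MapsTo f (ball (0 : ℂ) 1) (ball (0 : ℂ) 1) ∧ f 0 = 0 ∧
          deriv f 0 = (lam : ℂ) * ξ₁ ∧ iteratedDeriv 2 f 0 = (lam : ℂ) ^ 2 * ξ₂} =
      Real.sqrt (‖ξ₁‖ ^ 2 + ‖ξ₂‖ / 2) := by
  have hjet : ∀ lam : ℝ, 0 < lam →
      ‖(lam : ℂ) * ξ₁‖ ^ 2 + ‖(lam : ℂ) ^ 2 * ξ₂‖ / 2 = lam ^ 2 * (‖ξ₁‖ ^ 2 + ‖ξ₂‖ / 2) := by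
    intro lam hlam
    rw [norm_mul, norm_mul, norm_pow, Complex.norm_real, Real.norm_of_nonneg hlam.le]
    ring
  calc _ = sInf {x : ℝ | ∃ lam : ℝ, 0 < lam ∧ x = 1 / lam ∧
          lam ^ 2 * (‖ξ₁‖ ^ 2 + ‖ξ₂‖ / 2) ≤ 1} := by
        congr 1
        ext x
        refine exists_congr fun lam => and_congr_right fun hlam => and_congr_right fun _ => ?_
        rw [Complex.exists_mapsTo_ball_deriv_iteratedDeriv_two_iff, hjet lam hlam]
    _ = _ := sInf_one_div_of_sq_mul_le_one _
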